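/- arXiv:1508.03688 — 4 statements merged into one kernel-verified Lean document; each statement's English description precedes it below -/
import Mathlib

section
/- Let D = {D_a}_{a ∈ A} be a cover of a small category C, indexed by a totally ordered set A, and let I : Gr(Č^o(D)) → Gr(Č(D)) be the inclusion functor. Then there exist functors J : Gr(Č(D)) → Gr(Č^o(D)) and K : Gr(Č(D)) → Gr(Č(D)) such that J ∘ I is the identity functor of Gr(Č^o(D)), and there exist natural transformations t : K ⇒ I ∘ J and s : K ⇒ id_{Gr(Č(D))}. Here J sends an object x_{a_0…a_n} to x_{a_{σ(0)}…a_{σ(n)}}, where σ is the permutation reordering the indices into nondecreasing order (preserving the original order of equal indices), and K sends x_{a_0…a_n} to x_{a_0…a_n a_{σ(0)}…a_{σ(n)}}. -/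
open CategoryTheory

namespace CechCover

/-- A subcategory of a small category `C`: a set of objects together with, for each
pair of objects of `C`, a set of morphisms, closed under identities (of objects of the
subcategory) and under composition, all morphisms lying between objects of the
subcategory. -/
structure Subcat (C : Type) [SmallCategory C] where
  objs : Set C
  homs : ∀ x y : C, Set (x ⟶ y)
  homs_subset : ∀ (x y : C), (homs x y).Nonempty → x ∈ objs ∧ y ∈ objs
  id_mem : ∀ x ∈ objs, 𝟙 x ∈ homs x x
  comp_mem : ∀ {x y z : C} (f : x ⟶ y) (g : y ⟶ z),
    f ∈ homs x y → g ∈ homs y z → f ≫ g ∈ homs x z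

variable {C : Type} [SmallCategory C] {A : Type}

/-- The morphisms of the union `⋃ a, D a` of a family of subcategories: those
generated under composition by the morphisms of the `D a`. -/
inductive GenHom (D : A → Subcat C) : ∀ {x y : C}, (x ⟶ y) → Prop
  | of {x y : C} (a : A) (f : x ⟶ y) (hf : f ∈ (D a).homs x y) : GenHom D f
  | comp {x y z : C} (f : x ⟶ y) (g : y ⟶ z) :
      GenHom D f → GenHom D g → GenHom D (f ≫ g)

/-- `D` is a cover of `C`: the union of the subcategories `D a` is all of `C`. -/
def IsCover (D : A → Subcat C) : Prop :=
  (∀ x : C, ∃ a, x ∈ (D a).objs) ∧ ∀ {x y : C} (f : x ⟶ y), GenHom D f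

/-- An ideal of `C`: a full subcategory such that an object `y` belongs to it whenever
`C(y, x)` is nonempty for some object `x` of it. -/
def Subcat.IsIdeal (Dv : Subcat C) : Prop :=
  (∀ x y : C, x ∈ Dv.objs → y ∈ Dv.objs → Dv.homs x y = Set.univ) ∧
  ∀ x y : C, x ∈ Dv.objs → Nonempty (y ⟶ x) → y ∈ Dv.objs

/-- A filter of `C`: a full subcategory such that an object `y` belongs to it whenever
`C(x, y)` is nonempty for some object `x` of it. -/
def Subcat.IsFilter (Dv : Subcat C) : Prop :=
  (∀ x y : C, x ∈ Dv.objs → y ∈ Dv.objs → Dv.homs x y = Set.univ) ∧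
  ∀ x y : C, x ∈ Dv.objs → Nonempty (x ⟶ y) → y ∈ Dv.objs

/-- Objects of the Grothendieck construction `Gr(Č(D))` of the Čech nerve of a cover
`D`: tuples `x_{a₀…aₙ}` where `x` belongs to the intersection `D_{a₀} ∩ ⋯ ∩ D_{aₙ}`. -/
structure GrCechObj (D : A → Subcat C) where
  n : ℕ
  idx : Fin (n + 1) → A
  pt : C
  mem : ∀ i, pt ∈ (D (idx i)).objs

/-- Morphisms `x_{a₀…aₙ} ⟶ y_{b₀…bₘ}` of `Gr(Č(D))`: pairs `(φ, f)` of an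
order-preserving map `φ : [m] → [n]` with `b_j = a_{φ(j)}` for all `j`, and a morphism
`f : x ⟶ y` of the intersection `D_{b₀…bₘ}`. -/
structure GrCechHom (D : A → Subcat C) (X Y : GrCechObj D) where
  φ : Fin (Y.n + 1) →o Fin (X.n + 1)
  idx_eq : ∀ j, Y.idx j = X.idx (φ j)
  f : X.pt ⟶ Y.pt
  mem : ∀ j, f ∈ (D (Y.idx j)).homs X.pt Y.pt

theorem GrCechHom.ext' {D : A → Subcat C} {X Y : GrCechObj D}
    {F G : GrCechHom D X Y} (h1 : F.φ = G.φ) (h2 : F.f = G.f) : F = G := by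
  cases F; cases G; cases h1; cases h2; rfl

/-- The Grothendieck construction `Gr(Č(D))` of the Čech nerve, as a category. -/
instance GrCech.category (D : A → Subcat C) : Category (GrCechObj D) where
  Hom X Y := GrCechHom D X Y
  id X :=
    { φ := OrderHom.id
      idx_eq := fun _ => rfl
      f := 𝟙 X.pt
      mem := fun j => (D (X.idx j)).id_mem _ (X.mem j) }
  comp {X Y Z} F G :=
    { φ := F.φ.comp G.φ
      idx_eq := fun j => (G.idx_eq j).trans (F.idx_eq (G.φ j))
      f := F.f ≫ G.f
      mem := fun j => (D (Z.idx j)).comp_mem F.f G.f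
        (by rw [G.idx_eq j]; exact F.mem (G.φ j)) (G.mem j) }
  id_comp F := GrCechHom.ext' rfl (Category.id_comp _)
  comp_id F := GrCechHom.ext' rfl (Category.comp_id _)
  assoc F G H := GrCechHom.ext' rfl (Category.assoc _ _ _)

/-- The natural functor `ρ : Gr(Č(D)) ⥤ C` forgetting indices. -/
def grProj (D : A → Subcat C) : GrCechObj D ⥤ C where
  obj X := X.pt
  map F := F.f
  map_id _ := rfl
  map_comp _ _ := rfl

/-- The Grothendieck construction `Gr(Č^o(D))` of the ordered Čech nerve, with respect
to a total order `le` on the index set: the full subcategory of `Gr(Č(D))` on the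
objects with nondecreasing index tuple. -/
abbrev GrCechOrd (D : A → Subcat C) (le : A → A → Prop) : Type :=
  ObjectProperty.FullSubcategory (fun X : GrCechObj D => ∀ i j : Fin (X.n + 1), i ≤ j → le (X.idx i) (X.idx j))

/-- The inclusion functor `I : Gr(Č^o(D)) ⥤ Gr(Č(D))`. -/
def ordIncl (D : A → Subcat C) (le : A → A → Prop) : GrCechOrd D le ⥤ GrCechObj D :=
  ObjectProperty.ι _

/-- `x_{a_{σ(0)}…a_{σ(n)}}`: reindexing an object of `Gr(Č(D))` along a permutation
`σ`. -/
def sortObj {D : A → Subcat C} (X : GrCechObj D) (σ : Equiv.Perm (Fin (X.n + 1))) :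
    GrCechObj D where
  n := X.n
  idx := X.idx ∘ σ
  pt := X.pt
  mem i := X.mem (σ i)

/-- `x_{a_0…a_n a_{σ(0)}…a_{σ(n)}}`: doubling the index tuple of an object of
`Gr(Č(D))`, with the second half reindexed along a permutation `σ`. -/
def appendObj {D : A → Subcat C} (X : GrCechObj D) (σ : Equiv.Perm (Fin (X.n + 1))) :
    GrCechObj D where
  n := X.n + 1 + X.n
  idx := (Fin.append X.idx (X.idx ∘ σ) : Fin (X.n + 1 + (X.n + 1)) → A)
  pt := X.pt
  mem i := by
    refine Fin.addCases
      (motive := fun i : Fin (X.n + 1 + (X.n + 1)) =>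
        X.pt ∈ (D (Fin.append X.idx (X.idx ∘ σ) i)).objs) ?_ ?_ i
    · intro j; rw [Fin.append_left]; exact X.mem j
    · intro j; rw [Fin.append_right]; exact X.mem (σ j)

end CechCover

open CechCover

/-!
`J` sorts the index tuple of `x_{a₀…aₙ}` stably by a permutation `σ_a`, and sends `(φ, f)` to
`(σ_a⁻¹ ∘ φ ∘ σ_b, f)`. This map is order preserving because `σ_a⁻¹` is an order isomorphism
from `[n]`, ordered lexicographically by the pairs `(a_i, i)`, onto `[n]`; and when `b = a ∘ φ`
with `φ` monotone, `φ` preserves these lexicographic orders. On a sorted tuple `σ` is the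
identity, so `J ∘ I = id`.
`K` doubles the tuple to `a ++ a ∘ σ_a` and acts by `φ ⊔ (σ_a⁻¹ ∘ φ ∘ σ_b)` on `[m] ⊔ [m]`;
`t` and `s` are the inclusions of the second and the first half, with identity underlying
morphism.
-/

namespace Tuple

theorem append_comp_perm_mem_range {α : Type*} {n : ℕ} (f : Fin n → α) (σ : Equiv.Perm (Fin n))
    (j : Fin (n + n)) : Fin.append f (f ∘ σ) j ∈ Set.range f := by
  induction j using Fin.addCases <;>
    simp only [Fin.append_left, Fin.append_right, Function.comp_apply, Set.mem_range_self]

variable {α : Type*} [LinearOrder α] {m n : ℕ}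

theorem sort_symm_le_sort_symm_iff {f : Fin n → α} {u v : Fin n} :
    (sort f).symm u ≤ (sort f).symm v ↔ toLex (f u, u) ≤ toLex (f v, v) :=
  (graphEquiv₂ f).symm.le_iff_le

def sortConj (f : Fin n → α) (g : Fin m → α) (φ : Fin m →o Fin n) (h : ∀ j, g j = f (φ j)) :
    Fin m →o Fin n where
  toFun j := (sort f).symm (φ (sort g j))
  monotone' i j hij := by
    have key : toLex (g (sort g i), sort g i) ≤ toLex (g (sort g j), sort g j) := by
      rwa [← sort_symm_le_sort_symm_iff, Equiv.symm_apply_apply, Equiv.symm_apply_apply]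
    rw [Prod.Lex.toLex_le_toLex] at key
    rw [sort_symm_le_sort_symm_iff, ← h, ← h, Prod.Lex.toLex_le_toLex]
    exact key.imp_right fun ⟨hg, hle⟩ => ⟨hg, φ.monotone hle⟩

@[simp]
theorem sortConj_apply (f : Fin n → α) (g : Fin m → α) (φ : Fin m →o Fin n)
    (h : ∀ j, g j = f (φ j)) (j : Fin m) : sortConj f g φ h j = (sort f).symm (φ (sort g j)) :=
  rfl

theorem apply_sort_sortConj (f : Fin n → α) (g : Fin m → α) (φ : Fin m →o Fin n)
    (h : ∀ j, g j = f (φ j)) (j : Fin m) : g (sort g j) = f (sort f (sortConj f g φ h j)) := by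
  simp [h]

theorem sortConj_id (f : Fin n → α) : sortConj f f OrderHom.id (fun _ => rfl) = OrderHom.id := by
  ext j : 2; exact (sort f).symm_apply_apply j

theorem sortConj_comp {k : ℕ} (f : Fin n → α) (g : Fin m → α) (e : Fin k → α)
    (φ : Fin m →o Fin n) (ψ : Fin k →o Fin m) (h : ∀ j, g j = f (φ j)) (h' : ∀ j, e j = g (ψ j)) :
    sortConj f e (φ.comp ψ) (fun j => (h' j).trans (h _)) =
      (sortConj f g φ h).comp (sortConj g e ψ h') := by
  ext; simp

theorem sortConj_of_monotone {f : Fin n → α} {g : Fin m → α} (hf : Monotone f) (hg : Monotone g)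
    (φ : Fin m →o Fin n) (h : ∀ j, g j = f (φ j)) : sortConj f g φ h = φ := by
  ext; simp [sort_eq_refl_iff_monotone.mpr hf, sort_eq_refl_iff_monotone.mpr hg]

end Tuple

namespace OrderHom

variable {p q r s : ℕ}

def ordinalSum (u : Fin p →o Fin r) (v : Fin q →o Fin s) : Fin (p + q) →o Fin (r + s) where
  toFun := Fin.append (Fin.castAdd s ∘ u) (Fin.natAdd r ∘ v)
  monotone' i j hij := by
    induction i using Fin.addCases <;> induction j using Fin.addCases <;>
      simp only [Fin.append_left, Fin.append_right, Function.comp_apply, Fin.le_iff_val_le_val,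
        Fin.val_castAdd, Fin.val_natAdd] at hij ⊢
    case left.left a b => exact u.monotone hij
    case left.right a b => have := (u a).isLt; omega
    case right.left a b => have := b.isLt; omega
    case right.right a b => exact Nat.add_le_add_left (v.monotone (Nat.le_of_add_le_add_left hij)) r

@[simp]
theorem ordinalSum_castAdd (u : Fin p →o Fin r) (v : Fin q →o Fin s) (i : Fin p) :
    ordinalSum u v (Fin.castAdd q i) = Fin.castAdd s (u i) :=
  Fin.append_left _ _ i

@[simp]
theorem ordinalSum_natAdd (u : Fin p →o Fin r) (v : Fin q →o Fin s) (i : Fin q) :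
    ordinalSum u v (Fin.natAdd p i) = Fin.natAdd r (v i) :=
  Fin.append_right _ _ i

theorem ordinalSum_id : ordinalSum (OrderHom.id : Fin p →o Fin p) (OrderHom.id : Fin q →o Fin q) =
    OrderHom.id := by
  ext i : 2
  induction i using Fin.addCases <;>
    simp only [ordinalSum_castAdd, ordinalSum_natAdd, id_coe, id_eq]

theorem ordinalSum_comp {p' q' : ℕ} (u : Fin r →o Fin p') (v : Fin s →o Fin q')
    (u' : Fin p →o Fin r) (v' : Fin q →o Fin s) :
    ordinalSum (u.comp u') (v.comp v') = (ordinalSum u v).comp (ordinalSum u' v') := by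
  ext i : 2
  induction i using Fin.addCases <;>
    simp only [ordinalSum_castAdd, ordinalSum_natAdd, comp_coe, Function.comp_apply]

theorem append_eq_append_ordinalSum {α : Type*} {a : Fin r → α} {b : Fin s → α} {a' : Fin p → α}
    {b' : Fin q → α} {u : Fin p →o Fin r} {v : Fin q →o Fin s} (hu : ∀ i, a' i = a (u i))
    (hv : ∀ i, b' i = b (v i)) (j : Fin (p + q)) :
    Fin.append a' b' j = Fin.append a b (ordinalSum u v j) := by
  induction j using Fin.addCases <;>
    simp only [ordinalSum_castAdd, ordinalSum_natAdd, Fin.append_left, Fin.append_right, hu, hv]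

end OrderHom

namespace CechCover

open Tuple

variable {C : Type} [SmallCategory C] {A : Type} {D : A → Subcat C}

theorem GrCechHom.ext_val {X Y : GrCechObj D} {F G : X ⟶ Y}
    (hφ : ∀ j, (F.φ j : ℕ) = G.φ j) (hf : F.f = G.f) : F = G :=
  GrCechHom.ext' (OrderHom.ext _ _ (funext fun j => Fin.ext (hφ j))) hf

@[simp]
theorem GrCechHom.comp_φ {X Y Z : GrCechObj D} (F : X ⟶ Y) (G : Y ⟶ Z) :
    (F ≫ G).φ = F.φ.comp G.φ :=
  rfl

@[simp]
theorem GrCechHom.comp_f {X Y Z : GrCechObj D} (F : X ⟶ Y) (G : Y ⟶ Z) :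
    (F ≫ G).f = F.f ≫ G.f :=
  rfl

theorem GrCechOrd.eqToHom_hom_φ_val {le : A → A → Prop} {X Y : GrCechOrd D le} (h : X = Y)
    (j : Fin (Y.obj.n + 1)) : ((eqToHom h).hom.φ j : ℕ) = j := by
  subst h; rfl

theorem GrCechOrd.eqToHom_hom_f {le : A → A → Prop} {X Y : GrCechOrd D le} (h : X = Y) :
    (eqToHom h).hom.f = eqToHom (congrArg (·.obj.pt) h) := by
  subst h; rfl

theorem sortObj_of_monotone [LinearOrder A] (X : GrCechObj D) (h : Monotone X.idx) :
    sortObj X (sort X.idx) = X := by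
  rw [sort_eq_refl_iff_monotone.mpr h]; rfl

theorem appendObj_idx_mem_range (X : GrCechObj D) (σ : Equiv.Perm (Fin (X.n + 1)))
    (j : Fin (X.n + 1 + X.n + 1)) : (appendObj X σ).idx j ∈ Set.range X.idx :=
  append_comp_perm_mem_range X.idx σ j

def appendObjToSortObj (X : GrCechObj D) (σ : Equiv.Perm (Fin (X.n + 1))) :
    appendObj X σ ⟶ sortObj X σ where
  φ := (Fin.natAddOrderEmb _).toOrderHom
  idx_eq j := (Fin.append_right X.idx (X.idx ∘ σ) j).symm
  f := 𝟙 X.pt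
  mem j := (D _).id_mem _ (X.mem (σ j))

def appendObjToSelf (X : GrCechObj D) (σ : Equiv.Perm (Fin (X.n + 1))) :
    appendObj X σ ⟶ X where
  φ := (Fin.castAddOrderEmb (n := X.n + 1) (X.n + 1)).toOrderHom
  idx_eq j := (Fin.append_left X.idx (X.idx ∘ σ) j).symm
  f := 𝟙 X.pt
  mem j := (D _).id_mem _ (X.mem j)

variable (D) [LinearOrder A]

def sortFunctor : GrCechObj D ⥤ GrCechOrd D (· ≤ ·) where
  obj X := ⟨sortObj X (sort X.idx), fun _ _ hij => monotone_sort X.idx hij⟩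
  map {X Y} F := InducedCategory.homMk
    { φ := sortConj X.idx Y.idx F.φ F.idx_eq
      idx_eq := apply_sort_sortConj X.idx Y.idx F.φ F.idx_eq
      f := F.f
      mem := fun j => F.mem (sort Y.idx j) }
  map_id X := InducedCategory.hom_ext (GrCechHom.ext' (sortConj_id X.idx) rfl)
  map_comp F G := InducedCategory.hom_ext
    (GrCechHom.ext' (sortConj_comp _ _ _ F.φ G.φ F.idx_eq G.idx_eq) rfl)

def sortAppendFunctor : GrCechObj D ⥤ GrCechObj D where
  obj X := appendObj X (sort X.idx)
  map {X Y} F :=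
    { φ := OrderHom.ordinalSum (p := Y.n + 1) (q := Y.n + 1) (r := X.n + 1) (s := X.n + 1) F.φ
        (sortConj X.idx Y.idx F.φ F.idx_eq)
      idx_eq := OrderHom.append_eq_append_ordinalSum (a := X.idx) (b := X.idx ∘ sort X.idx)
        (a' := Y.idx) (b' := Y.idx ∘ sort Y.idx) F.idx_eq
        (apply_sort_sortConj X.idx Y.idx F.φ F.idx_eq)
      f := F.f
      mem := fun j => by
        obtain ⟨i, hi⟩ := appendObj_idx_mem_range Y (sort Y.idx) j
        rw [← hi]
        exact F.mem i }
  map_id X := GrCechHom.ext'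
    ((congrArg (OrderHom.ordinalSum OrderHom.id) (sortConj_id X.idx)).trans
      OrderHom.ordinalSum_id) rfl
  map_comp {X Y Z} F G := GrCechHom.ext'
    ((congrArg (OrderHom.ordinalSum (F.φ.comp G.φ))
      (sortConj_comp X.idx Y.idx Z.idx F.φ G.φ F.idx_eq G.idx_eq)).trans
      (OrderHom.ordinalSum_comp ..)) rfl

def sortAppendToSort : sortAppendFunctor D ⟶ sortFunctor D ⋙ ordIncl D (· ≤ ·) where
  app X := appendObjToSortObj X (sort X.idx)
  naturality _ _ _ := GrCechHom.ext'
    (OrderHom.ext _ _ (funext fun j => OrderHom.ordinalSum_natAdd _ _ j))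
    ((Category.comp_id _).trans (Category.id_comp _).symm)

def sortAppendToId : sortAppendFunctor D ⟶ 𝟭 (GrCechObj D) where
  app X := appendObjToSelf X (sort X.idx)
  naturality _ _ _ := GrCechHom.ext'
    (OrderHom.ext _ _ (funext fun j => OrderHom.ordinalSum_castAdd _ _ j))
    ((Category.comp_id _).trans (Category.id_comp _).symm)

theorem ordIncl_comp_sortFunctor : ordIncl D (· ≤ ·) ⋙ sortFunctor D = 𝟭 _ := by
  have hobj (X : GrCechOrd D (· ≤ ·)) : (ordIncl D (· ≤ ·) ⋙ sortFunctor D).obj X = X :=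
    ObjectProperty.FullSubcategory.ext (sortObj_of_monotone X.obj fun _ _ => X.property _ _)
  refine CategoryTheory.Functor.ext hobj fun X Y F =>
    ObjectProperty.hom_ext _ (GrCechHom.ext_val (fun j => ?_) ?_)
  · have hφ := sortConj_of_monotone (fun _ _ => X.property _ _) (fun _ _ => Y.property _ _)
      F.hom.φ F.hom.idx_eq
    simp only [ObjectProperty.FullSubcategory.comp_hom, GrCechHom.comp_φ, OrderHom.comp_coe,
      Function.comp_apply, GrCechOrd.eqToHom_hom_φ_val]
    exact congrArg Fin.val <| congr($hφ j).trans <|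
      congrArg F.hom.φ (Fin.ext (GrCechOrd.eqToHom_hom_φ_val _ j).symm)
  · simp only [ObjectProperty.FullSubcategory.comp_hom, GrCechHom.comp_f, GrCechOrd.eqToHom_hom_f]
    exact ((Category.id_comp _).trans (Category.comp_id _)).symm

end CechCover

theorem ordered_cech_nerve_retraction_general
    {C : Type} [SmallCategory C] {A : Type} [LinearOrder A] (D : A → Subcat C) :
    ∃ (J : GrCechObj D ⥤ GrCechOrd D (· ≤ ·)) (K : GrCechObj D ⥤ GrCechObj D),
      ordIncl D (· ≤ ·) ⋙ J = 𝟭 (GrCechOrd D (· ≤ ·)) ∧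
      Nonempty (K ⟶ J ⋙ ordIncl D (· ≤ ·)) ∧
      Nonempty (K ⟶ 𝟭 (GrCechObj D)) ∧
      ∀ X : GrCechObj D, ∃ σ : Equiv.Perm (Fin (X.n + 1)),
        Monotone (X.idx ∘ σ) ∧
        (∀ p q : Fin (X.n + 1), p < q → X.idx (σ p) = X.idx (σ q) → σ p < σ q) ∧
        (J.obj X).obj = sortObj X σ ∧
        K.obj X = appendObj X σ :=
  ⟨sortFunctor D, sortAppendFunctor D, ordIncl_comp_sortFunctor D, ⟨sortAppendToSort D⟩,
    ⟨sortAppendToId D⟩, fun X =>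
      ⟨Tuple.sort X.idx, Tuple.monotone_sort X.idx, (Tuple.eq_sort_iff.mp rfl).2, rfl, rfl⟩⟩

/-- For a cover `D` of a small category `C` indexed by a totally ordered set, with
`I : Gr(Č^o(D)) ⥤ Gr(Č(D))` the inclusion, there are functors
`J : Gr(Č(D)) ⥤ Gr(Č^o(D))` and `K : Gr(Č(D)) ⥤ Gr(Č(D))` with `J ∘ I = id`, and
natural transformations `t : K ⟹ I ∘ J` and `s : K ⟹ id`; here `J` sends
`x_{a_0…a_n}` to `x_{a_{σ(0)}…a_{σ(n)}}` where `σ` is the stable sorting permutation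
of the index tuple (monotone reordering preserving the original order of equal
indices), and `K` sends `x_{a_0…a_n}` to `x_{a_0…a_n a_{σ(0)}…a_{σ(n)}}`. -/
theorem ordered_cech_nerve_retraction
    {C : Type} [SmallCategory C] {A : Type} [LinearOrder A] (D : A → Subcat C)
    (hcover : IsCover D) :
    ∃ (J : GrCechObj D ⥤ GrCechOrd D (· ≤ ·)) (K : GrCechObj D ⥤ GrCechObj D),
      ordIncl D (· ≤ ·) ⋙ J = 𝟭 (GrCechOrd D (· ≤ ·)) ∧
      Nonempty (K ⟶ J ⋙ ordIncl D (· ≤ ·)) ∧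
      Nonempty (K ⟶ 𝟭 (GrCechObj D)) ∧
      ∀ X : GrCechObj D, ∃ σ : Equiv.Perm (Fin (X.n + 1)),
        Monotone (X.idx ∘ σ) ∧
        (∀ p q : Fin (X.n + 1), p < q → X.idx (σ p) = X.idx (σ q) → σ p < σ q) ∧
        (J.obj X).obj = sortObj X σ ∧
        K.obj X = appendObj X σ :=
  ordered_cech_nerve_retraction_general D
end

section
/- Let D = {D_a}_{a ∈ A} be a cover of a small category C, indexed by a totally ordered set A. Then the inclusion functor L : Gr(Č^o(D̃)) → Gr(Č^o(D)) from the Grothendieck construction of the reduced Čech nerve to that of the ordered Čech nerve has a right adjoint, namely the reduction functor R which sends an object x_{a_0…a_n} to the object x_{α_0…α_{n'}} obtained by removing duplicate indices. -/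
open CategoryTheory

namespace CechCover

variable {C : Type} [SmallCategory C] {A : Type}

/-- The Grothendieck construction `Gr(Č^o(D̃))` of the reduced Čech nerve, with respect
to a total order on the index set with strict order `lt`: the full subcategory of
`Gr(Č(D))` on the objects with strictly increasing index tuple.  (Between two objects
with pairwise distinct indices, the index maps `φ` of morphisms of `Gr(Č(D))` are
automatically injective, so this agrees with the Grothendieck construction over
`Δ_inj`.) -/
abbrev GrCechRed (D : A → Subcat C) (lt : A → A → Prop) : Type :=
  ObjectProperty.FullSubcategory (fun X : GrCechObj D => ∀ i j : Fin (X.n + 1), i < j → lt (X.idx i) (X.idx j))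

/-- The inclusion functor `Gr(Č^o(D̃)) ⥤ Gr(Č(D))`. -/
def redIncl (D : A → Subcat C) (lt : A → A → Prop) : GrCechRed D lt ⥤ GrCechObj D :=
  ObjectProperty.ι _

/-- The inclusion functor `L : Gr(Č^o(D̃)) ⥤ Gr(Č^o(D))`. -/
def redToOrd (D : A → Subcat C) [LinearOrder A] :
    GrCechRed D (· < ·) ⥤ GrCechOrd D (· ≤ ·) :=
  ObjectProperty.ιOfLE (fun X hX i j hij => by
    rcases lt_or_eq_of_le hij with h | h
    · exact le_of_lt (hX i j h)
    · exact le_of_eq (by rw [h]))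

end CechCover

open CechCover

/-!
Out of an object `x_{a₀…aₙ}` with strictly increasing indices, a morphism of `Gr(Č(D))` is
determined by its underlying morphism `f` of `C` (the index map is forced by injectivity), and
a morphism to `y_{b₀…bₘ}` over `f` exists exactly when every `b_j` occurs among the `aᵢ` and
`f` lies in every `D_{b_j}` (monotonicity of the index map then comes for free). Both
conditions only see the set `{b_j}`, so `y` with its distinct indices listed increasingly
receives the same morphisms from reduced objects as `y` itself: this is the right adjoint.
-/

namespace CechCover

variable {C : Type} [SmallCategory C] {A : Type} {D : A → Subcat C}

namespace GrCechObj

lemma pt_mem_of_mem_range (X : GrCechObj D) {a : A} (ha : a ∈ Set.range X.idx) :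
    X.pt ∈ (D a).objs := by
  obtain ⟨i, rfl⟩ := ha
  exact X.mem i

variable [LinearOrder A]

/-- `x_{a₀…aₙ}` with each index listed once, in increasing order. -/
noncomputable def dedup (X : GrCechObj D) : GrCechObj D where
  n := (Finset.univ.image X.idx).card - 1
  idx := (Finset.univ.image X.idx).orderEmbOfFin
    (Nat.succ_pred_eq_of_pos (Finset.card_pos.mpr (Finset.univ_nonempty.image _))).symm
  pt := X.pt
  mem j := X.pt_mem_of_mem_range <|
    (Finset.mem_image.mp (Finset.orderEmbOfFin_mem _ _ j)).imp fun _ => And.right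

lemma range_dedup_idx (X : GrCechObj D) : Set.range X.dedup.idx = Set.range X.idx := by
  simp [dedup]

lemma dedup_idx_strictMono (X : GrCechObj D) : StrictMono X.dedup.idx :=
  OrderEmbedding.strictMono _

end GrCechObj

namespace GrCechHom

variable {X Y : GrCechObj D}

lemma range_idx_subset (F : X ⟶ Y) : Set.range Y.idx ⊆ Set.range X.idx := by
  rintro _ ⟨j, rfl⟩
  exact ⟨F.φ j, (F.idx_eq j).symm⟩

lemma f_mem_of_mem_range (F : X ⟶ Y) {a : A} (ha : a ∈ Set.range Y.idx) :
    F.f ∈ (D a).homs X.pt Y.pt := by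
  obtain ⟨j, rfl⟩ := ha
  exact F.mem j

lemma ext_of_injective (hX : Function.Injective X.idx) {F G : X ⟶ Y} (h : F.f = G.f) :
    F = G :=
  GrCechHom.ext' (OrderHom.ext _ _ (funext fun j => hX (by rw [← F.idx_eq, ← G.idx_eq]))) h

noncomputable def ofRangeSubset [Preorder A] (hX : StrictMono X.idx) (hY : Monotone Y.idx)
    (hrange : Set.range Y.idx ⊆ Set.range X.idx) (f : X.pt ⟶ Y.pt)
    (hf : ∀ a ∈ Set.range Y.idx, f ∈ (D a).homs X.pt Y.pt) : X ⟶ Y where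
  φ :=
    { toFun j := (hrange ⟨j, rfl⟩).choose
      monotone' j j' h := by
        rw [← hX.le_iff_le, (hrange ⟨j, rfl⟩).choose_spec, (hrange ⟨j', rfl⟩).choose_spec]
        exact hY h }
  idx_eq j := (hrange ⟨j, rfl⟩).choose_spec.symm
  f := f
  mem j := hf _ ⟨j, rfl⟩

end GrCechHom

section

variable [Preorder A]

lemma GrCechRed.idx_strictMono (X : GrCechRed D (· < ·)) : StrictMono X.obj.idx :=
  fun _ _ h => X.property _ _ h

lemma GrCechOrd.idx_monotone (Y : GrCechOrd D (· ≤ ·)) : Monotone Y.obj.idx :=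
  fun _ _ h => Y.property _ _ h

end

variable [LinearOrder A]

noncomputable def GrCechOrd.reduce (Y : GrCechOrd D (· ≤ ·)) : GrCechRed D (· < ·) :=
  ⟨Y.obj.dedup, fun _ _ h => Y.obj.dedup_idx_strictMono h⟩

noncomputable def reduceHomEquiv (X : GrCechRed D (· < ·)) (Y : GrCechOrd D (· ≤ ·)) :
    ((redToOrd D).obj X ⟶ Y) ≃ (X ⟶ Y.reduce) where
  toFun F := ObjectProperty.homMk <|
    GrCechHom.ofRangeSubset X.idx_strictMono Y.obj.dedup_idx_strictMono.monotone
      (Y.obj.range_dedup_idx.subset.trans F.hom.range_idx_subset) F.hom.f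
      fun _ ha => F.hom.f_mem_of_mem_range (Y.obj.range_dedup_idx.subset ha)
  invFun G := ObjectProperty.homMk <|
    GrCechHom.ofRangeSubset X.idx_strictMono Y.idx_monotone
      (Y.obj.range_dedup_idx.symm.subset.trans G.hom.range_idx_subset) G.hom.f
      fun _ ha => G.hom.f_mem_of_mem_range (Y.obj.range_dedup_idx.symm.subset ha)
  left_inv _ :=
    InducedCategory.hom_ext (GrCechHom.ext_of_injective X.idx_strictMono.injective rfl)
  right_inv _ :=
    InducedCategory.hom_ext (GrCechHom.ext_of_injective X.idx_strictMono.injective rfl)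

variable (D) in
noncomputable def reduction : GrCechOrd D (· ≤ ·) ⥤ GrCechRed D (· < ·) :=
  Adjunction.rightAdjointOfEquiv reduceHomEquiv fun X' _ _ _ _ =>
    InducedCategory.hom_ext <|
      GrCechHom.ext_of_injective (GrCechRed.idx_strictMono X').injective rfl

end CechCover

theorem reduced_cech_nerve_inclusion_right_adjoint_general
    {C : Type} [SmallCategory C] {A : Type} [LinearOrder A] (D : A → Subcat C) :
    ∃ R : GrCechOrd D (· ≤ ·) ⥤ GrCechRed D (· < ·),
      Nonempty (redToOrd D ⊣ R) ∧
      ∀ Y : GrCechOrd D (· ≤ ·),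
        (R.obj Y).obj.pt = Y.obj.pt ∧
        Set.range (R.obj Y).obj.idx = Set.range Y.obj.idx :=
  ⟨reduction D, ⟨Adjunction.adjunctionOfEquivRight _ _⟩, fun Y => ⟨rfl, Y.obj.range_dedup_idx⟩⟩

/-- For a cover `D` of a small category `C` indexed by a totally ordered set, the
inclusion functor `L : Gr(Č^o(D̃)) ⥤ Gr(Č^o(D))` of the reduced Čech nerve into the
ordered Čech nerve has a right adjoint, namely the reduction functor `R` sending an
object `x_{a_0…a_n}` to the object obtained by removing duplicate indices (same
underlying object of `C`, same set of indices, strictly increasing index tuple). -/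
theorem reduced_cech_nerve_inclusion_right_adjoint
    {C : Type} [SmallCategory C] {A : Type} [LinearOrder A] (D : A → Subcat C)
    (hcover : IsCover D) :
    ∃ R : GrCechOrd D (· ≤ ·) ⥤ GrCechRed D (· < ·),
      Nonempty (redToOrd D ⊣ R) ∧
      ∀ Y : GrCechOrd D (· ≤ ·),
        (R.obj Y).obj.pt = Y.obj.pt ∧
        Set.range (R.obj Y).obj.idx = Set.range Y.obj.idx :=
  reduced_cech_nerve_inclusion_right_adjoint_general D
end

section
/- Let D = {D_a}_{a ∈ A} be a locally finite cover of a small category C, indexed by a totally ordered set A, such that every D_a is a filter of C. Then the natural functor Gr(Č^o(D̃^op)) → C^op, from the Grothendieck construction of the reduced Čech nerve of the opposite cover D^op = {D_a^op}_{a ∈ A} of C^op, has a left adjoint. -/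
open CategoryTheory

namespace CechCover

variable {C : Type} [SmallCategory C] {A : Type}

/-- A cover is locally finite if every object belongs to only finitely many of the
subcategories. -/
def IsLocallyFinite (D : A → Subcat C) : Prop :=
  ∀ x : C, {a : A | x ∈ (D a).objs}.Finite

/-- The opposite of a subcategory, as a subcategory of the opposite category. -/
def Subcat.op (Dv : Subcat C) : Subcat Cᵒᵖ where
  objs := {x | x.unop ∈ Dv.objs}
  homs x y := {f | f.unop ∈ Dv.homs y.unop x.unop}
  homs_subset x y := fun ⟨f, hf⟩ =>
    ⟨(Dv.homs_subset _ _ ⟨f.unop, hf⟩).2, (Dv.homs_subset _ _ ⟨f.unop, hf⟩).1⟩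
  id_mem x hx := Dv.id_mem x.unop hx
  comp_mem f g hf hg := Dv.comp_mem g.unop f.unop hg hf

end CechCover

open CechCover

/-! In an ideal cover, the indices of an object are inherited by everything mapping into it:
if `x ⟶ y` and `y ∈ E_b`, then `x ∈ E_b`, and the morphism lies in `E_b` by fullness. So the
left adjoint sends `x` to `x` indexed by all the (finitely many, and at least one) `a` with
`x ∈ E_a`, listed increasingly; a morphism from it to `y_{b₀…bₘ}` is then just a morphism
`x ⟶ y`, because its index map `j ↦ position of b_j` is forced. For a filter cover `D`, the
opposite cover `D^op` is an ideal cover of `Cᵒᵖ`. -/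

namespace CechCover

variable {C : Type} [SmallCategory C] {A : Type}

theorem Subcat.IsFilter.op_isIdeal {D : Subcat C} (h : D.IsFilter) : D.op.IsIdeal :=
  ⟨fun x y hx hy => Set.eq_univ_of_forall fun f =>
      show f.unop ∈ D.homs y.unop x.unop by rw [h.1 _ _ hy hx]; trivial,
    fun x y hx ⟨f⟩ => h.2 x.unop y.unop hx ⟨f.unop⟩⟩

theorem IsLocallyFinite.op {D : A → Subcat C} (h : IsLocallyFinite D) :
    IsLocallyFinite fun a => (D a).op :=
  fun x => h x.unop

theorem GrCechHom.ext_of_injective_s12 {D : A → Subcat C} {X Y : GrCechObj D}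
    (hX : Function.Injective X.idx) {F G : GrCechHom D X Y} (h : F.f = G.f) : F = G :=
  GrCechHom.ext' (OrderHom.ext _ _ (funext fun j => hX ((F.idx_eq j).symm.trans (G.idx_eq j)))) h

variable {E : A → Subcat C}

section MaximalObj

variable (hlf : IsLocallyFinite E)

noncomputable def IsLocallyFinite.indices (x : C) : Finset A :=
  (hlf x).toFinset

theorem IsLocallyFinite.mem_indices {x : C} {a : A} : a ∈ hlf.indices x ↔ x ∈ (E a).objs :=
  Set.Finite.mem_toFinset _

theorem IsLocallyFinite.idx_mem_indices_of_hom (hideal : ∀ a, (E a).IsIdeal) {x : C}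
    (Y : GrCechObj E) (g : x ⟶ Y.pt) (j : Fin (Y.n + 1)) : Y.idx j ∈ hlf.indices x :=
  hlf.mem_indices.mpr ((hideal _).2 _ _ (Y.mem j) ⟨g⟩)

variable [LinearOrder A]

theorem GrCechRed.strictMono_idx (Y : GrCechRed E (· < ·)) : StrictMono Y.obj.idx :=
  fun i j => Y.property i j

variable (hne : ∀ x, ∃ a, x ∈ (E a).objs)

noncomputable def enumIndices (x : C) :
    Fin ((hlf.indices x).card - 1 + 1) ≃o hlf.indices x :=
  (hlf.indices x).orderIsoOfFin <| (Nat.succ_pred_eq_of_pos <| Finset.card_pos.mpr <|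
    (hne x).imp fun _ => hlf.mem_indices.mpr).symm

/-- The object `x_{a₀…aₙ}` of `Gr(Č^o(E))`, where `a₀ < ⋯ < aₙ` are all the indices
with `x ∈ E_{aᵢ}`. -/
noncomputable def maximalObj (x : C) : GrCechRed E (· < ·) :=
  ⟨{ n := (hlf.indices x).card - 1
     idx := fun i => enumIndices hlf hne x i
     pt := x
     mem := fun i => hlf.mem_indices.mp (enumIndices hlf hne x i).2 },
   fun _ _ hij => Subtype.coe_lt_coe.mpr ((enumIndices hlf hne x).strictMono hij)⟩

theorem injective_maximalObj_idx (x : C) : Function.Injective (maximalObj hlf hne x).obj.idx :=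
  Subtype.val_injective.comp (enumIndices hlf hne x).injective

noncomputable def maximalObjLift (hideal : ∀ a, (E a).IsIdeal) {x : C} (Y : GrCechRed E (· < ·))
    (g : x ⟶ Y.obj.pt) :
    maximalObj hlf hne x ⟶ Y :=
  ObjectProperty.homMk
    { φ := ⟨fun j => (enumIndices hlf hne x).symm
          ⟨Y.obj.idx j, hlf.idx_mem_indices_of_hom hideal Y.obj g j⟩,
        fun _ _ hij => (enumIndices hlf hne x).symm.monotone
          (Subtype.mk_le_mk.mpr (Y.strictMono_idx.monotone hij))⟩
      idx_eq := fun j => congrArg Subtype.val ((enumIndices hlf hne x).apply_symm_apply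
          ⟨Y.obj.idx j, hlf.idx_mem_indices_of_hom hideal Y.obj g j⟩).symm
      f := g
      mem := fun j => Set.eq_univ_iff_forall.mp ((hideal _).1 _ _
        (hlf.mem_indices.mp (hlf.idx_mem_indices_of_hom hideal Y.obj g j)) (Y.obj.mem j)) g }

noncomputable def maximalObjHomEquiv (hideal : ∀ a, (E a).IsIdeal) (x : C)
    (Y : GrCechRed E (· < ·)) :
    (maximalObj hlf hne x ⟶ Y) ≃ (x ⟶ Y.obj.pt) where
  toFun F := F.hom.f
  invFun := maximalObjLift hlf hne hideal Y
  left_inv _ := ObjectProperty.hom_ext _ (GrCechHom.ext_of_injective_s12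
    (injective_maximalObj_idx hlf hne x) rfl)
  right_inv _ := rfl

end MaximalObj

theorem isRightAdjoint_redIncl_comp_grProj_of_isIdeal [LinearOrder A] (hlf : IsLocallyFinite E)
    (hne : ∀ x, ∃ a, x ∈ (E a).objs) (hideal : ∀ a, (E a).IsIdeal) :
    (redIncl E (· < ·) ⋙ grProj E).IsRightAdjoint :=
  ⟨_, ⟨Adjunction.adjunctionOfEquivLeft (maximalObjHomEquiv hlf hne hideal)
    fun _ _ _ _ _ => rfl⟩⟩

end CechCover

/-- For a locally finite filter cover `D` of a small category `C` indexed by a totally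
ordered set, the natural functor `Gr(Č^o(D̃^op)) ⥤ C^op`, from the Grothendieck
construction of the reduced Čech nerve of the opposite cover `D^op` of `C^op`, has a
left adjoint. -/
theorem reduced_cech_nerve_left_adjoint_of_filter_cover
    {C : Type} [SmallCategory C] {A : Type} [LinearOrder A] (D : A → Subcat C)
    (hcover : IsCover D) (hlf : IsLocallyFinite D) (hfilter : ∀ a, (D a).IsFilter) :
    ∃ π : Cᵒᵖ ⥤ GrCechRed (fun a => (D a).op) (· < ·),
      Nonempty (π ⊣ redIncl (fun a => (D a).op) (· < ·) ⋙ grProj (fun a => (D a).op)) :=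
  (isRightAdjoint_redIncl_comp_grProj_of_isIdeal hlf.op (fun x => hcover.1 x.unop)
    fun a => (hfilter a).op_isIdeal).exists_leftAdjoint
end

section
/- Let C be a finite category and let D = {D_a}_{a ∈ A} be a cover of C indexed by a totally ordered finite set A, such that every D_a is an ideal of C or every D_a is a filter of C. Suppose that C has Euler characteristic and that each intersection D_{a_0…a_i} (for a_0 < … < a_i in A) has Euler characteristic. Then χ(C) = Σ_{i=0}^{#A−1} Σ_{a_0 < … < a_i} (−1)^i χ(D_{a_0…a_i}). -/
/-!
In the filter case a weighting `w` of `C` restricts to a weighting of every intersection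
`D_{a_0…a_i}`, because an upward closed full subcategory contains every morphism leaving one
of its objects; dually, in the ideal case a coweighting of `C` restricts. Hence `χ(C)` and all
the `χ(D_{a_0…a_i})` are sums of one function over the respective sets of objects, and the
formula is the inclusion–exclusion principle for the cover of `ob C` by the objects of the `D_a`.
-/

open CategoryTheory

namespace CechCover

variable {C : Type} [SmallCategory C] {A : Type}

/-- The objects of a full subcategory on `S ⊆ ob C`, as a finset. -/
noncomputable def objFinset [Fintype C] (S : Set C) : Finset C := by
  classical exact Finset.univ.filter (· ∈ S)

/-- A weighting on the full subcategory of a finite category `C` on the set of objects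
`S`: a vector `w` with `∑_b ζ(a, b) · w(b) = 1` for every object `a` of `S`, where
`ζ(a, b)` is the number of morphisms `a ⟶ b`. -/
def IsWeighting [Fintype C] [∀ x y : C, Fintype (x ⟶ y)] (S : Set C) (w : C → ℚ) : Prop :=
  ∀ a ∈ S, ∑ b ∈ objFinset S, (Fintype.card (a ⟶ b) : ℚ) * w b = 1

/-- A coweighting, dually: `∑_a v(a) · ζ(a, b) = 1` for every object `b` of `S`. -/
def IsCoweighting [Fintype C] [∀ x y : C, Fintype (x ⟶ y)] (S : Set C) (v : C → ℚ) : Prop :=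
  ∀ b ∈ S, ∑ a ∈ objFinset S, v a * (Fintype.card (a ⟶ b) : ℚ) = 1

/-- A finite (full sub)category has Euler characteristic if it admits both a weighting
and a coweighting. -/
def HasEulerChar [Fintype C] [∀ x y : C, Fintype (x ⟶ y)] (S : Set C) : Prop :=
  (∃ w, IsWeighting S w) ∧ (∃ v, IsCoweighting S v)

/-- The Euler characteristic: the sum of the values of a weighting (this is independent
of the choice of weighting, and agrees with the sum of the values of any coweighting,
whenever the category has Euler characteristic). -/
noncomputable def eulerChar [Fintype C] [∀ x y : C, Fintype (x ⟶ y)] (S : Set C) : ℚ := by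
  classical exact if h : ∃ w, IsWeighting S w then ∑ b ∈ objFinset S, h.choose b else 0

end CechCover

open Finset in
lemma sum_powerset_nonempty_eq_sum_range_card {ι M : Type*} [Fintype ι] [AddCommMonoid M]
    (g : Finset ι → M) :
    ∑ t ∈ (univ : Finset ι).powerset with t.Nonempty, g t =
      ∑ i ∈ range (Fintype.card ι), ∑ t : Finset ι with #t = i + 1, g t := by
  rw [sum_filter, sum_powerset, card_univ, sum_range_succ']
  simp only [powersetCard_zero, sum_singleton, Finset.not_nonempty_empty, if_false, add_zero]
  refine sum_congr rfl fun i _ => ?_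
  rw [powersetCard_eq_filter, powerset_univ]
  exact sum_congr rfl fun t ht => if_pos (card_pos.1 (by rw [(mem_filter.1 ht).2]; omega))

open Finset in
lemma sum_eq_alternating_sum_sum_inter_of_cover {X ι R : Type*} [Fintype X] [Fintype ι]
    [CommRing R] (U : ι → Set X) (hU : ∀ x, ∃ i, x ∈ U i) (f : X → R) :
    ∑ x, f x = ∑ i ∈ range (Fintype.card ι), ∑ s : Finset ι with #s = i + 1,
      (-1) ^ i * ∑ x, {x | ∀ a ∈ s, x ∈ U a}.indicator f x := by
  classical
  have hunion : (⋃ i ∈ (univ : Finset ι), U i) = Set.univ :=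
    Set.eq_univ_of_forall fun x => by simpa using hU x
  calc ∑ x, f x = ∑ x, (⋃ i ∈ (univ : Finset ι), U i).indicator f x := by
        rw [hunion, Set.indicator_univ]
    _ = ∑ t ∈ (univ : Finset ι).powerset with t.Nonempty,
          (-1 : ℤ) ^ (#t + 1) • ∑ x, (⋂ i ∈ t, U i).indicator f x := by
        simp_rw [indicator_biUnion_eq_sum_powerset, smul_sum]
        exact sum_comm
    _ = _ := by
        rw [sum_powerset_nonempty_eq_sum_range_card]
        refine sum_congr rfl fun i _ => sum_congr rfl fun s hs => ?_
        rw [(mem_filter.1 hs).2]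
        simp [pow_succ, Set.ofPred_forall]

namespace CechCover

variable {C : Type} [Fintype C]

lemma mem_objFinset {S : Set C} {x : C} : x ∈ objFinset S ↔ x ∈ S := by
  classical
  simp [objFinset]

lemma sum_objFinset_eq_sum_indicator (S : Set C) (g : C → ℚ) :
    ∑ x ∈ objFinset S, g x = ∑ x, S.indicator g x := by
  classical
  simp only [objFinset, Finset.sum_filter, Set.indicator_apply]

variable [SmallCategory C] [∀ x y : C, Fintype (x ⟶ y)]

lemma IsWeighting.sum_eq_sum_coweighting {S : Set C} {w v : C → ℚ}
    (hw : IsWeighting S w) (hv : IsCoweighting S v) :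
    ∑ b ∈ objFinset S, w b = ∑ a ∈ objFinset S, v a :=
  calc ∑ b ∈ objFinset S, w b
      = ∑ b ∈ objFinset S, (∑ a ∈ objFinset S, v a * (Fintype.card (a ⟶ b) : ℚ)) * w b :=
        Finset.sum_congr rfl fun b hb => by rw [hv b (mem_objFinset.mp hb), one_mul]
    _ = ∑ a ∈ objFinset S, v a * ∑ b ∈ objFinset S, (Fintype.card (a ⟶ b) : ℚ) * w b := by
        simp only [Finset.sum_mul, Finset.mul_sum, mul_assoc]
        exact Finset.sum_comm
    _ = ∑ a ∈ objFinset S, v a :=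
        Finset.sum_congr rfl fun a ha => by rw [hw a (mem_objFinset.mp ha), mul_one]

lemma eulerChar_eq_sum_weighting {S : Set C} (hS : HasEulerChar S) {w : C → ℚ}
    (hw : IsWeighting S w) : eulerChar S = ∑ b ∈ objFinset S, w b := by
  classical
  have hex : ∃ w, IsWeighting S w := ⟨w, hw⟩
  obtain ⟨v, hv⟩ := hS.2
  rw [eulerChar, dif_pos hex, hex.choose_spec.sum_eq_sum_coweighting hv,
    hw.sum_eq_sum_coweighting hv]

lemma eulerChar_eq_sum_coweighting {S : Set C} (hS : HasEulerChar S) {v : C → ℚ}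
    (hv : IsCoweighting S v) : eulerChar S = ∑ a ∈ objFinset S, v a := by
  obtain ⟨w, hw⟩ := hS.1
  rw [eulerChar_eq_sum_weighting hS hw, hw.sum_eq_sum_coweighting hv]

lemma IsWeighting.restrict {S T : Set C} {w : C → ℚ} (hw : IsWeighting T w) (hST : S ⊆ T)
    (hclosed : ∀ a b, a ∈ S → b ∈ T → Nonempty (a ⟶ b) → b ∈ S) : IsWeighting S w := by
  intro a ha
  rw [← hw a (hST ha)]
  refine Finset.sum_subset (fun b hb => mem_objFinset.2 (hST (mem_objFinset.1 hb))) ?_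
  intro b hbT hbS
  have : IsEmpty (a ⟶ b) := not_nonempty_iff.1 fun hab =>
    hbS (mem_objFinset.2 (hclosed a b ha (mem_objFinset.1 hbT) hab))
  simp

lemma IsCoweighting.restrict {S T : Set C} {v : C → ℚ} (hv : IsCoweighting T v) (hST : S ⊆ T)
    (hclosed : ∀ a b, b ∈ S → a ∈ T → Nonempty (a ⟶ b) → a ∈ S) : IsCoweighting S v := by
  intro b hb
  rw [← hv b (hST hb)]
  refine Finset.sum_subset (fun a ha => mem_objFinset.2 (hST (mem_objFinset.1 ha))) ?_
  intro a haT haS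
  have : IsEmpty (a ⟶ b) := not_nonempty_iff.1 fun hab =>
    haS (mem_objFinset.2 (hclosed a b hb (mem_objFinset.1 haT) hab))
  simp

lemma eulerChar_eq_sum_indicator_weighting {w : C → ℚ} (hw : IsWeighting Set.univ w)
    {S : Set C} (hS : HasEulerChar S) (hup : ∀ a b, a ∈ S → Nonempty (a ⟶ b) → b ∈ S) :
    eulerChar S = ∑ x, S.indicator w x := by
  rw [eulerChar_eq_sum_weighting hS (hw.restrict S.subset_univ fun a b ha _ => hup a b ha),
    sum_objFinset_eq_sum_indicator]

lemma eulerChar_eq_sum_indicator_coweighting {v : C → ℚ} (hv : IsCoweighting Set.univ v)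
    {S : Set C} (hS : HasEulerChar S) (hdown : ∀ a b, b ∈ S → Nonempty (a ⟶ b) → a ∈ S) :
    eulerChar S = ∑ x, S.indicator v x := by
  rw [eulerChar_eq_sum_coweighting hS (hv.restrict S.subset_univ fun a b hb _ => hdown a b hb),
    sum_objFinset_eq_sum_indicator]

lemma exists_eulerChar_eq_sum_indicator {A : Type} (D : A → Subcat C)
    (h : (∀ a, (D a).IsIdeal) ∨ (∀ a, (D a).IsFilter)) (hC : HasEulerChar (Set.univ : Set C))
    (hD : ∀ s : Finset A, s.Nonempty → HasEulerChar {x : C | ∀ a ∈ s, x ∈ (D a).objs}) :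
    ∃ f : C → ℚ, eulerChar (Set.univ : Set C) = ∑ x, f x ∧
      ∀ s : Finset A, s.Nonempty →
        eulerChar {x : C | ∀ a ∈ s, x ∈ (D a).objs} =
          ∑ x, {x : C | ∀ a ∈ s, x ∈ (D a).objs}.indicator f x := by
  rcases h with hI | hF
  · obtain ⟨v, hv⟩ := hC.2
    refine ⟨v, by simpa using eulerChar_eq_sum_indicator_coweighting hv hC (by simp),
      fun s hs => eulerChar_eq_sum_indicator_coweighting hv (hD s hs) ?_⟩
    exact fun a b hb hab c hc => (hI c).2 b a (hb c hc) hab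
  · obtain ⟨w, hw⟩ := hC.1
    refine ⟨w, by simpa using eulerChar_eq_sum_indicator_weighting hw hC (by simp),
      fun s hs => eulerChar_eq_sum_indicator_weighting hw (hD s hs) ?_⟩
    exact fun a b ha hab c hc => (hF c).2 a b (ha c hc) hab

end CechCover

open CechCover

/-- Inclusion-exclusion principle: for an ideal cover or a filter cover
`D = {D_a}_{a ∈ A}` of a finite category `C`, indexed by a totally ordered finite set
`A`, if `C` and each intersection `D_{a_0…a_i}` (for `a_0 < … < a_i`) have Euler
characteristics, then `χ(C) = ∑_{i} ∑_{a_0 < … < a_i} (-1)^i χ(D_{a_0…a_i})` (the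
inner sum being indexed by the subsets of `A` of cardinality `i + 1`). -/
theorem euler_char_inclusion_exclusion
    {C : Type} [SmallCategory C] [Fintype C] [∀ x y : C, Fintype (x ⟶ y)]
    {A : Type} [Fintype A] [LinearOrder A] [DecidableEq A] (D : A → Subcat C)
    (hcover : IsCover D)
    (h : (∀ a, (D a).IsIdeal) ∨ (∀ a, (D a).IsFilter))
    (hC : HasEulerChar (Set.univ : Set C))
    (hD : ∀ s : Finset A, s.Nonempty → HasEulerChar {x : C | ∀ a ∈ s, x ∈ (D a).objs}) :
    eulerChar (Set.univ : Set C) =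
      ∑ i ∈ Finset.range (Fintype.card A),
        ∑ s ∈ Finset.univ.filter (fun s : Finset A => s.card = i + 1),
          (-1 : ℚ) ^ i * eulerChar {x : C | ∀ a ∈ s, x ∈ (D a).objs} := by
  obtain ⟨f, hfC, hfS⟩ := exists_eulerChar_eq_sum_indicator D h hC hD
  rw [hfC, sum_eq_alternating_sum_sum_inter_of_cover (fun a => (D a).objs) hcover.1 f]
  refine Finset.sum_congr rfl fun i _ => Finset.sum_congr rfl fun s hs => ?_
  rw [hfS s (Finset.card_pos.1 (by rw [(Finset.mem_filter.1 hs).2]; omega))]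
end
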